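/- Let u, v be smooth solutions of the Gurevich–Zybin system and set ψ := u_x² − 2 v_x. Then ψ satisfies the transport-decay equation D_t ψ + 2 u_x ψ = 0, where D_t = ∂_t + u ∂_x. In particular, if ψ(·,0) > 0 everywhere, then ψ(x(t),t) > 0 along any characteristic curve x'(t) = u(x(t),t). -/

import Mathlib

noncomputable def px (f : ℝ × ℝ → ℝ) (p : ℝ × ℝ) : ℝ := deriv (fun x => f (x, p.2)) p.1
noncomputable def pt (f : ℝ × ℝ → ℝ) (p : ℝ × ℝ) : ℝ := deriv (fun t => f (p.1, t)) p.2
noncomputable def Dt (u f : ℝ × ℝ → ℝ) (p : ℝ × ℝ) : ℝ := pt f p + u p * px f p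

private lemma sliceX {f : ℝ × ℝ → ℝ} (hf : Differentiable ℝ f) (p : ℝ × ℝ) :
    HasDerivAt (fun x => f (x, p.2)) (fderiv ℝ f p (1, 0)) p.1 := by
  have hc : HasDerivAt (fun x : ℝ => (x, p.2)) ((1 : ℝ), (0 : ℝ)) p.1 :=
    (hasDerivAt_id p.1).prodMk (hasDerivAt_const _ _)
  have := ((hf (p.1, p.2)).hasFDerivAt).comp_hasDerivAt p.1 hc
  exact this

private lemma sliceT {f : ℝ × ℝ → ℝ} (hf : Differentiable ℝ f) (p : ℝ × ℝ) :
    HasDerivAt (fun t => f (p.1, t)) (fderiv ℝ f p (0, 1)) p.2 := by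
  have hc : HasDerivAt (fun t : ℝ => (p.1, t)) ((0 : ℝ), (1 : ℝ)) p.2 :=
    (hasDerivAt_const _ _).prodMk (hasDerivAt_id p.2)
  have := ((hf (p.1, p.2)).hasFDerivAt).comp_hasDerivAt p.2 hc
  exact this

private lemma px_eq {f : ℝ × ℝ → ℝ} (hf : Differentiable ℝ f) (p : ℝ × ℝ) :
    px f p = fderiv ℝ f p (1, 0) := (sliceX hf p).deriv

private lemma pt_eq {f : ℝ × ℝ → ℝ} (hf : Differentiable ℝ f) (p : ℝ × ℝ) :
    pt f p = fderiv ℝ f p (0, 1) := (sliceT hf p).deriv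

private lemma eval_deriv {F : ℝ × ℝ → (ℝ × ℝ →L[ℝ] ℝ)} {p : ℝ × ℝ}
    (hF : DifferentiableAt ℝ F p) (w v : ℝ × ℝ) :
    fderiv ℝ (fun q => F q w) p v = fderiv ℝ F p v w := by
  rw [fderiv_clm_apply hF (differentiableAt_const w)]
  simp

private lemma pair_apply (L : ℝ × ℝ →L[ℝ] ℝ) (a b : ℝ) :
    L (a, b) = a * L (1, 0) + b * L (0, 1) := by
  have h : (a, b) = a • ((1 : ℝ), (0 : ℝ)) + b • ((0 : ℝ), (1 : ℝ)) := by simp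
  rw [h, map_add, map_smul, map_smul]
  simp [smul_eq_mul]

theorem stmt3 (u v : ℝ × ℝ → ℝ) (hu : ContDiff ℝ (⊤ : ℕ∞) u) (hv : ContDiff ℝ (⊤ : ℕ∞) v)
    (h1 : ∀ p, Dt u u p = v p) (h2 : ∀ p, Dt u v p = 0)
    (ψ : ℝ × ℝ → ℝ) (hψ : ∀ p, ψ p = (px u p) ^ 2 - 2 * px v p) :
    (∀ p, Dt u ψ p + 2 * px u p * ψ p = 0) ∧
    (∀ x : ℝ → ℝ, (∀ t, HasDerivAt x (u (x t, t)) t) →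
      (∀ y : ℝ, 0 < ψ (y, 0)) → ∀ t, 0 < ψ (x t, t)) := by
  have hud : Differentiable ℝ u := hu.differentiable (by simp)
  have hvd : Differentiable ℝ v := hv.differentiable (by simp)
  set F : ℝ × ℝ → (ℝ × ℝ →L[ℝ] ℝ) := fderiv ℝ u with hF
  set G : ℝ × ℝ → (ℝ × ℝ →L[ℝ] ℝ) := fderiv ℝ v with hG
  have hFc : ContDiff ℝ (⊤ : ℕ∞) F := hu.fderiv_right (by simp)
  have hGc : ContDiff ℝ (⊤ : ℕ∞) G := hv.fderiv_right (by simp)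
  have hFd : Differentiable ℝ F := hFc.differentiable (by simp)
  have hGd : Differentiable ℝ G := hGc.differentiable (by simp)
  set pxu : ℝ × ℝ → ℝ := fun q => F q (1, 0) with hpxu_def
  set ptu : ℝ × ℝ → ℝ := fun q => F q (0, 1) with hptu_def
  set pxv : ℝ × ℝ → ℝ := fun q => G q (1, 0) with hpxv_def
  set ptv : ℝ × ℝ → ℝ := fun q => G q (0, 1) with hptv_def
  have hpxuc : ContDiff ℝ (⊤ : ℕ∞) pxu := hFc.clm_apply contDiff_const
  have hptuc : ContDiff ℝ (⊤ : ℕ∞) ptu := hFc.clm_apply contDiff_const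
  have hpxvc : ContDiff ℝ (⊤ : ℕ∞) pxv := hGc.clm_apply contDiff_const
  have hptvc : ContDiff ℝ (⊤ : ℕ∞) ptv := hGc.clm_apply contDiff_const
  have hpxud : Differentiable ℝ pxu := hpxuc.differentiable (by simp)
  have hptud : Differentiable ℝ ptu := hptuc.differentiable (by simp)
  have hpxvd : Differentiable ℝ pxv := hpxvc.differentiable (by simp)
  have hptvd : Differentiable ℝ ptv := hptvc.differentiable (by simp)
  -- ψ as an explicit smooth function
  have hψf : ψ = fun q => pxu q ^ 2 - 2 * pxv q := by
    funext q
    rw [hψ, px_eq hud, px_eq hvd]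
  have hψc : ContDiff ℝ (⊤ : ℕ∞) ψ := by
    rw [hψf]; exact (hpxuc.pow 2).sub (contDiff_const.mul hpxvc)
  have hψd : Differentiable ℝ ψ := hψc.differentiable (by simp)
  -- the PDEs as pointwise identities
  have h1' : ∀ q, ptu q + u q * pxu q = v q := by
    intro q
    have := h1 q
    rwa [Dt, pt_eq hud, px_eq hud] at this
  have h2' : ∀ q, ptv q + u q * pxv q = 0 := by
    intro q
    have := h2 q
    rwa [Dt, pt_eq hvd, px_eq hvd] at this
  -- Part 1
  have part1 : ∀ p, Dt u ψ p + 2 * px u p * ψ p = 0 := by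
    intro p
    set F2 := fderiv ℝ F p with hF2
    set G2 := fderiv ℝ G p with hG2
    have hsymF : F2 (0, 1) (1, 0) = F2 (1, 0) (0, 1) :=
      second_derivative_symmetric (fun y => (hud y).hasFDerivAt) (hFd p).hasFDerivAt _ _
    have hsymG : G2 (0, 1) (1, 0) = G2 (1, 0) (0, 1) :=
      second_derivative_symmetric (fun y => (hvd y).hasFDerivAt) (hGd p).hasFDerivAt _ _
    -- derivatives of pxu, ptu, pxv, ptv
    have epxu : ∀ w : ℝ × ℝ, fderiv ℝ pxu p w = F2 w (1, 0) := fun w => eval_deriv (hFd p) _ w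
    have eptu : ∀ w : ℝ × ℝ, fderiv ℝ ptu p w = F2 w (0, 1) := fun w => eval_deriv (hFd p) _ w
    have epxv : ∀ w : ℝ × ℝ, fderiv ℝ pxv p w = G2 w (1, 0) := fun w => eval_deriv (hGd p) _ w
    have eptv : ∀ w : ℝ × ℝ, fderiv ℝ ptv p w = G2 w (0, 1) := fun w => eval_deriv (hGd p) _ w
    -- px ψ p and pt ψ p
    have hpxψ : px ψ p = 2 * pxu p * F2 (1, 0) (1, 0) - 2 * G2 (1, 0) (1, 0) := by
      have h := ((sliceX hpxud p).pow 2).sub ((sliceX hpxvd p).const_mul 2)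
      have h2 : px ψ p = (2 : ℕ) * pxu p ^ (2 - 1) * fderiv ℝ pxu p (1, 0)
          - 2 * fderiv ℝ pxv p (1, 0) := by
        rw [px, hψf]; exact h.deriv
      rw [h2, epxu, epxv]; push_cast; ring
    have hptψ : pt ψ p = 2 * pxu p * F2 (0, 1) (1, 0) - 2 * G2 (0, 1) (1, 0) := by
      have h := ((sliceT hpxud p).pow 2).sub ((sliceT hpxvd p).const_mul 2)
      have h2 : pt ψ p = (2 : ℕ) * pxu p ^ (2 - 1) * fderiv ℝ pxu p (0, 1)
          - 2 * fderiv ℝ pxv p (0, 1) := by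
        rw [pt, hψf]; exact h.deriv
      rw [h2, epxu, epxv]; push_cast; ring
    -- differentiate h1' in x at p
    have Eq1 : F2 (1, 0) (0, 1) + pxu p * pxu p + u p * F2 (1, 0) (1, 0) = pxv p := by
      have hL := (sliceX hptud p).add ((sliceX hud p).mul (sliceX hpxud p))
      have hfun : (fun s => ptu (s, p.2) + u (s, p.2) * pxu (s, p.2))
          = fun s => v (s, p.2) := funext fun s => h1' (s, p.2)
      have hR : HasDerivAt (fun s => v (s, p.2))
          (fderiv ℝ ptu p (1, 0) + (fderiv ℝ u p (1, 0) * pxu p + u p * fderiv ℝ pxu p (1, 0)))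
          p.1 := hfun ▸ hL
      have hdv := hR.deriv
      have hd : deriv (fun s => v (s, p.2)) p.1 = pxv p := px_eq hvd p
      rw [hd, eptu, epxu] at hdv
      have hux : fderiv ℝ u p (1, 0) = pxu p := rfl
      rw [hux] at hdv
      linarith [hdv]
    -- differentiate h2' in x at p
    have Eq2 : G2 (1, 0) (0, 1) + pxu p * pxv p + u p * G2 (1, 0) (1, 0) = 0 := by
      have hL := (sliceX hptvd p).add ((sliceX hud p).mul (sliceX hpxvd p))
      have hfun : (fun s => ptv (s, p.2) + u (s, p.2) * pxv (s, p.2))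
          = fun _ : ℝ => (0 : ℝ) := funext fun s => h2' (s, p.2)
      have hR : HasDerivAt (fun _ : ℝ => (0 : ℝ))
          (fderiv ℝ ptv p (1, 0) + (fderiv ℝ u p (1, 0) * pxv p + u p * fderiv ℝ pxv p (1, 0)))
          p.1 := hfun ▸ hL
      have h0 := hR.deriv
      rw [deriv_const] at h0
      rw [eptv, epxv] at h0
      have hux : fderiv ℝ u p (1, 0) = pxu p := rfl
      rw [hux] at h0
      linarith
    have hpxU : px u p = pxu p := px_eq hud p
    have hpsiP : ψ p = pxu p ^ 2 - 2 * pxv p := by rw [hψf]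
    rw [Dt, hpxψ, hptψ, hpxU, hpsiP, hsymF, hsymG]
    linear_combination 2 * pxu p * Eq1 - 2 * Eq2
  refine ⟨part1, ?_⟩
  -- Part 2
  intro x hx hpos t
  set c : ℝ → ℝ × ℝ := fun t => (x t, t) with hc_def
  have hc : ∀ s, HasDerivAt c (u (c s), 1) s := fun s => (hx s).prodMk (hasDerivAt_id s)
  set g : ℝ → ℝ := fun s => ψ (c s) with hg_def
  have hg : ∀ s, HasDerivAt g (-2 * px u (c s) * ψ (c s)) s := by
    intro s
    have h := ((hψd (c s)).hasFDerivAt).comp_hasDerivAt s (hc s)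
    have hval : fderiv ℝ ψ (c s) (u (c s), 1) = -2 * px u (c s) * ψ (c s) := by
      rw [pair_apply]
      have e1 : fderiv ℝ ψ (c s) (1, 0) = px ψ (c s) := (px_eq hψd (c s)).symm
      have e2 : fderiv ℝ ψ (c s) (0, 1) = pt ψ (c s) := (pt_eq hψd (c s)).symm
      rw [e1, e2]
      have := part1 (c s)
      rw [Dt] at this
      linarith
    rw [hval] at h
    exact h
  have hxcont : Continuous x := by
    have : Differentiable ℝ x := fun s => (hx s).differentiableAt
    exact this.continuous
  have hccont : Continuous c := hxcont.prodMk continuous_id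
  set a : ℝ → ℝ := fun s => px u (c s) with ha_def
  have hacont : Continuous a := by
    have : a = fun s => pxu (c s) := funext fun s => px_eq hud (c s)
    rw [this]
    exact hpxuc.continuous.comp hccont
  set A : ℝ → ℝ := fun s => ∫ r in (0 : ℝ)..s, 2 * a r with hA_def
  have hA : ∀ s, HasDerivAt A (2 * a s) s := fun s =>
    ((continuous_const.mul hacont).integral_hasStrictDerivAt 0 s).hasDerivAt
  set h : ℝ → ℝ := fun s => g s * Real.exp (A s) with hh_def
  have hh0 : ∀ s, HasDerivAt h 0 s := by
    intro s
    have hgs : HasDerivAt g (-2 * a s * g s) s := hg s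
    have := hgs.mul ((hA s).exp)
    rw [show (-2 * a s * g s * Real.exp (A s) + g s * (Real.exp (A s) * (2 * a s))) = 0 by ring] at this
    exact this
  have hconst : ∀ s, h s = h 0 := fun s =>
    is_const_of_deriv_eq_zero (fun r => (hh0 r).differentiableAt) (fun r => (hh0 r).deriv) s 0
  have hA0 : A 0 = 0 := intervalIntegral.integral_same
  have hh0pos : 0 < h 0 := by
    have : h 0 = g 0 * Real.exp (A 0) := rfl
    rw [this, hA0, Real.exp_zero, mul_one]
    exact hpos (x 0)
  have hht : 0 < g t * Real.exp (A t) := by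
    have : g t * Real.exp (A t) = h t := rfl
    rw [this, hconst t]
    exact hh0pos
  have : 0 < g t := by nlinarith [Real.exp_pos (A t)]
  exact this
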